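/- arXiv:2308.14919 — 2 statements merged into one kernel-verified Lean document; each statement's English description precedes it below -/
import Mathlib

section
/- Exponential concentration of first return times: Let (X_t)_{t≥0} be a Markov chain on a finite state space S. Then for any state s ∈ S with τ_s < ∞ and any t > 0, P[ H_s^+ ≥ t ] ≤ e · e^{−t/(e·τ_s)}, where H_s^+ is the first return time to s and τ_s is the maximal expected hitting time of s. -/
open MeasureTheory ProbabilityTheory Filter
open scoped ENNReal ENat

noncomputable section

/-- The first return time to `s` of the process `X` (`⊤` if `s` is never revisited). -/
def retTime {S Ω : Type*} (X : ℕ → Ω → S) (s : S) (ω : Ω) : ℕ∞ :=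
  ⨅ (m : ℕ) (_ : 0 < m ∧ X m ω = s), (m : ℕ∞)

/-- `avoidProb P s t x`: the probability that a Markov chain with transition kernel `P`
started at `x` avoids state `s` during the next `t` steps. -/
def avoidProb {S : Type*} [Fintype S] [DecidableEq S] (P : S → S → ℝ≥0∞) (s : S) :
    ℕ → S → ℝ≥0∞
  | 0, _ => 1
  | t + 1, x => ∑ y ∈ Finset.univ.erase s, P x y * avoidProb P s t y

/-- Expected first return time to `s` of a chain with kernel `P` started at `x`. -/
def expRet {S : Type*} [Fintype S] [DecidableEq S] (P : S → S → ℝ≥0∞) (s x : S) : ℝ≥0∞ :=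
  ∑' t : ℕ, avoidProb P s t x

/-- Maximal expected hitting time `τ_s = max_{x} E_x[H_s^+]`. -/
def maxHit {S : Type*} [Fintype S] [DecidableEq S] (P : S → S → ℝ≥0∞) (s : S) : ℝ≥0∞ :=
  ⨆ x, expRet P s x


/-!
Write `p_k(x) = P_x(H_s^+ > k)` and `T_k(x) = ∑_{n ≥ k} p_n(x)`. Conditioning on the position
at time `k` gives `T_k ≤ τ_s p_k = τ_s (T_k - T_{k+1})`, so the tails decay geometrically:
`T_k ≤ τ_s (1 - 1/τ_s)^k`. As `p` is nonincreasing, a block of `⌊τ_s⌋ + 1 ≥ τ_s` consecutive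
terms ending at `p_m` fits under `T_{m - ⌊τ_s⌋}`, whence `p_m ≤ e^{1 - m/τ_s}`. This is stronger
than the claimed bound once `m ≥ 1`, and `P[H_s^+ ≥ t] ≤ p_m` for `m < t ≤ m + 1`.
-/

section RealSequences

variable {p : ℕ → ℝ} {τ : ℝ}

theorem tsum_nat_add_le_geometric (hτ : 1 ≤ τ) (hp0 : p 0 ≤ 1)
    (hsum : Summable p) (htail : ∀ k, ∑' n, p (n + k) ≤ τ * p k) (k : ℕ) :
    ∑' n, p (n + k) ≤ (1 - 1 / τ) ^ k * τ := by
  have hτ0 : 0 < τ := by linarith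
  induction k with
  | zero => exact (htail 0).trans (by rw [pow_zero, one_mul]; nlinarith)
  | succ k ih =>
    have hsplit : ∑' n, p (n + k) = p k + ∑' n, p (n + (k + 1)) := by
      simp only [((summable_nat_add_iff k).mpr hsum).tsum_eq_zero_add, zero_add,
        add_right_comm _ 1 k, add_assoc]
    have hpk : (∑' n, p (n + k)) / τ ≤ p k := by rw [div_le_iff₀ hτ0]; linarith [htail k]
    have hc : 0 ≤ 1 - 1 / τ := by rw [sub_nonneg, div_le_one hτ0]; exact hτ
    calc ∑' n, p (n + (k + 1)) ≤ (1 - 1 / τ) * ∑' n, p (n + k) := by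
          linarith [show (1 - 1 / τ) * ∑' n, p (n + k) = ∑' n, p (n + k) - (∑' n, p (n + k)) / τ
            by ring]
      _ ≤ (1 - 1 / τ) * ((1 - 1 / τ) ^ k * τ) := mul_le_mul_of_nonneg_left ih hc
      _ = (1 - 1 / τ) ^ (k + 1) * τ := by ring

theorem le_exp_one_sub_div_of_tsum_tail_le (hτ : 1 ≤ τ) (hp : ∀ n, 0 ≤ p n)
    (hanti : Antitone p) (hp0 : p 0 ≤ 1) (hsum : Summable p)
    (htail : ∀ k, ∑' n, p (n + k) ≤ τ * p k) (m : ℕ) :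
    p m ≤ Real.exp (1 - m / τ) := by
  have hτ0 : 0 < τ := by linarith
  obtain ⟨j, hjτ, hτj⟩ : ∃ j : ℕ, (j : ℝ) ≤ τ ∧ τ ≤ j + 1 :=
    ⟨⌊τ⌋₊, Nat.floor_le hτ0.le, (Nat.lt_floor_add_one τ).le⟩
  rcases lt_or_ge m j with hmj | hjm
  · refine (hanti (Nat.zero_le m)).trans (hp0.trans (Real.one_le_exp ?_))
    rw [sub_nonneg, div_le_one hτ0]
    exact (Nat.cast_le.mpr hmj.le).trans hjτ
  obtain ⟨k, rfl⟩ := Nat.exists_eq_add_of_le hjm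
  have hblock : (j + 1) * p (j + k) ≤ ∑' n, p (n + k) :=
    calc (j + 1) * p (j + k) = ∑ _i ∈ Finset.range (j + 1), p (j + k) := by simp
      _ ≤ ∑ i ∈ Finset.range (j + 1), p (i + k) := Finset.sum_le_sum fun i hi =>
          hanti (by simp only [Finset.mem_range] at hi; omega)
      _ ≤ ∑' n, p (n + k) :=
          ((summable_nat_add_iff k).mpr hsum).sum_le_tsum _ fun i _ => hp (i + k)
  have hpk : p (j + k) ≤ (1 - 1 / τ) ^ k := by
    have := (mul_le_mul_of_nonneg_right hτj (hp (j + k))).trans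
      (hblock.trans (tsum_nat_add_le_geometric hτ hp0 hsum htail k))
    nlinarith
  calc p (j + k) ≤ (1 - 1 / τ) ^ k := hpk
    _ ≤ Real.exp (-1 / τ) ^ k := by
        gcongr
        · rw [sub_nonneg, div_le_one hτ0]; exact hτ
        · linarith [Real.add_one_le_exp (-1 / τ), show -1 / τ = -(1 / τ) by ring]
    _ = Real.exp (-k / τ) := by rw [← Real.exp_nat_mul]; ring_nf
    _ ≤ Real.exp (1 - ↑(j + k) / τ) := by
        gcongr
        rw [Nat.cast_add, le_sub_iff_add_le, ← add_div, div_le_one hτ0]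
        linarith

end RealSequences

theorem min_one_exp_one_sub_div_le {τ t : ℝ} {m : ℕ} (hτ : 1 ≤ τ) (ht : t ≤ m + 1) :
    min 1 (Real.exp (1 - m / τ)) ≤ Real.exp 1 * Real.exp (-(t / (Real.exp 1 * τ))) := by
  have he : 2 ≤ Real.exp 1 := by linarith [Real.add_one_le_exp 1]
  rw [← Real.exp_add, ← sub_eq_add_neg]
  rcases Nat.eq_zero_or_pos m with rfl | hm
  · refine min_le_left _ _ |>.trans (Real.one_le_exp ?_)
    rw [sub_nonneg, div_le_one (by positivity)]
    push_cast at ht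
    nlinarith
  · refine min_le_right _ _ |>.trans (Real.exp_le_exp.mpr ?_)
    rw [sub_le_sub_iff_left, div_le_div_iff₀ (by positivity) (by positivity)]
    have : t ≤ Real.exp 1 * m := by
      have : (1 : ℝ) ≤ m := by exact_mod_cast hm
      nlinarith
    calc t * τ ≤ Real.exp 1 * m * τ := by gcongr
      _ = m * (Real.exp 1 * τ) := by ring

section AvoidProb

variable {S : Type*} [Fintype S] [DecidableEq S] (P : S → S → ℝ≥0∞) (s : S)

theorem avoidProb_succ_le (hrow : ∀ x, ∑ y, P x y = 1) (n : ℕ) (x : S) :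
    avoidProb P s (n + 1) x ≤ avoidProb P s n x := by
  induction n generalizing x with
  | zero =>
    calc ∑ y ∈ Finset.univ.erase s, P x y * 1 ≤ ∑ y, P x y := by
          simpa using Finset.sum_le_sum_of_subset (Finset.erase_subset s Finset.univ)
      _ = 1 := hrow x
  | succ n ih => exact Finset.sum_le_sum fun y _ => mul_le_mul_right (ih y) _

theorem avoidProb_antitone (hrow : ∀ x, ∑ y, P x y = 1) (x : S) :
    Antitone fun n => avoidProb P s n x :=
  antitone_nat_of_succ_le fun n => avoidProb_succ_le P s hrow n x

theorem avoidProb_le_one (hrow : ∀ x, ∑ y, P x y = 1) (n : ℕ) (x : S) :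
    avoidProb P s n x ≤ 1 :=
  avoidProb_antitone P s hrow x (Nat.zero_le n)

theorem expRet_le_maxHit (x : S) : expRet P s x ≤ maxHit P s :=
  le_iSup (expRet P s) x

theorem one_le_toReal_maxHit (hτ : maxHit P s ≠ ⊤) : 1 ≤ (maxHit P s).toReal := by
  have : 1 ≤ maxHit P s :=
    calc 1 = avoidProb P s 0 s := rfl
      _ ≤ expRet P s s := ENNReal.le_tsum 0
      _ ≤ maxHit P s := expRet_le_maxHit P s s
  simpa using ENNReal.toReal_mono hτ this

theorem tsum_avoidProb_add_le (k : ℕ) (x : S) :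
    ∑' n, avoidProb P s (n + k) x ≤ maxHit P s * avoidProb P s k x := by
  induction k generalizing x with
  | zero =>
    calc ∑' n, avoidProb P s (n + 0) x = expRet P s x := rfl
      _ ≤ maxHit P s := expRet_le_maxHit P s x
      _ = maxHit P s * avoidProb P s 0 x := (mul_one _).symm
  | succ k ih =>
    calc ∑' n, avoidProb P s (n + (k + 1)) x
        = ∑ y ∈ Finset.univ.erase s, P x y * ∑' n, avoidProb P s (n + k) y := by
          simp only [← ENNReal.tsum_mul_left]
          rw [← Summable.tsum_finsetSum fun _ _ => ENNReal.summable]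
          rfl
      _ ≤ ∑ y ∈ Finset.univ.erase s, P x y * (maxHit P s * avoidProb P s k y) :=
          Finset.sum_le_sum fun y _ => mul_le_mul_right (ih y) _
      _ = maxHit P s * avoidProb P s (k + 1) x := by
          simp only [avoidProb, Finset.mul_sum]
          exact Finset.sum_congr rfl fun y _ => mul_left_comm _ _ _

theorem avoidProb_le_ofReal (hrow : ∀ x, ∑ y, P x y = 1) (hτ : maxHit P s ≠ ⊤) (m : ℕ)
    (x : S) :
    avoidProb P s m x ≤ ENNReal.ofReal (min 1 (Real.exp (1 - m / (maxHit P s).toReal))) := by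
  have hfin (n : ℕ) : avoidProb P s n x ≠ ⊤ :=
    ne_top_of_le_ne_top ENNReal.one_ne_top (avoidProb_le_one P s hrow n x)
  have hexp := le_exp_one_sub_div_of_tsum_tail_le (one_le_toReal_maxHit P s hτ)
    (fun n => ENNReal.toReal_nonneg)
    (fun a b hab => ENNReal.toReal_mono (hfin a) (avoidProb_antitone P s hrow x hab))
    (by simp [avoidProb])
    (ENNReal.summable_toReal (ne_top_of_le_ne_top hτ (expRet_le_maxHit P s x)))
    (fun k => by
      rw [← ENNReal.tsum_toReal_eq fun n => hfin _, ← ENNReal.toReal_mul]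
      exact ENNReal.toReal_mono (ENNReal.mul_ne_top hτ (hfin k)) (tsum_avoidProb_add_le P s k x))
    m
  rw [← ENNReal.ofReal_toReal (hfin m)]
  refine ENNReal.ofReal_le_ofReal (le_min ?_ hexp)
  simpa using ENNReal.toReal_mono ENNReal.one_ne_top (avoidProb_le_one P s hrow m x)

end AvoidProb

section Trajectory

variable {S Ω : Type*} (X : ℕ → Ω → S) (s : S)

def trajectory (m : ℕ) (ω : Ω) : Fin (m + 1) → S := fun i => X i ω

theorem measurable_trajectory [MeasurableSpace S] [MeasurableSpace Ω]
    (hX : ∀ t, Measurable (X t)) (m : ℕ) : Measurable (trajectory X m) :=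
  measurable_pi_lambda _ fun i => hX i

/-- The event `H_s^+ > m`. -/
def avoidEvent (m : ℕ) : Set Ω := {ω | ∀ i ∈ Finset.Icc 1 m, X i ω ≠ s}

theorem avoidEvent_eq_preimage [Fintype S] [DecidableEq S] (m : ℕ) :
    avoidEvent X s m = trajectory X m ⁻¹'
      ↑(Finset.univ.filter fun h : Fin (m + 1) → S => ∀ i : Fin (m + 1), i ≠ 0 → h i ≠ s) := by
  ext ω
  simp only [avoidEvent, trajectory, Finset.mem_Icc, Set.mem_preimage, Finset.coe_filter,
    Finset.mem_univ, true_and, Set.mem_ofPred_eq, Fin.forall_iff]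
  refine forall_congr' fun i => ⟨fun h hi hi0 => h ⟨?_, by omega⟩, fun h hi => h (by omega) ?_⟩
  · simpa [Nat.one_le_iff_ne_zero, Fin.ext_iff] using hi0
  · simpa [Fin.ext_iff] using Nat.one_le_iff_ne_zero.mp hi.1

theorem avoidEvent_succ_inter_of_ne {x : S} (hx : x ≠ s) (m : ℕ) :
    avoidEvent X s (m + 1) ∩ {ω | X (m + 1) ω = x}
      = avoidEvent X s m ∩ {ω | X (m + 1) ω = x} := by
  ext ω
  simp only [avoidEvent, Finset.mem_Icc, Set.mem_inter_iff, Set.mem_ofPred_eq,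
    and_congr_left_iff]
  intro hωx
  refine ⟨fun h i hi => h i ⟨hi.1, by omega⟩, fun h i hi => ?_⟩
  rcases Nat.lt_or_ge i (m + 1) with him | him
  · exact h i ⟨hi.1, by omega⟩
  · rwa [show i = m + 1 by omega, hωx]

theorem avoidEvent_succ_inter_self (m : ℕ) :
    avoidEvent X s (m + 1) ∩ {ω | X (m + 1) ω = s} = ∅ :=
  Set.eq_empty_of_forall_notMem fun _ hω => hω.1 (m + 1) (by simp) hω.2

theorem retTime_le {ω : Ω} {i : ℕ} (hi : 0 < i) (hXi : X i ω = s) : retTime X s ω ≤ i :=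
  iInf₂_le i ⟨hi, hXi⟩

theorem setOf_le_retTime_subset_avoidEvent {t : ℝ} {m : ℕ} (hm : (m : ℝ) < t) :
    {ω | ENNReal.ofReal t ≤ (retTime X s ω : ℝ≥0∞)} ⊆ avoidEvent X s m := by
  intro ω hω i hi hXi
  rw [Finset.mem_Icc] at hi
  have : ENNReal.ofReal t ≤ ENNReal.ofReal i := by
    simpa using hω.trans (ENat.toENNReal_le.mpr (retTime_le X s hi.1 hXi))
  have : t ≤ i := (ENNReal.ofReal_le_ofReal_iff i.cast_nonneg).mp this
  have : (i : ℝ) ≤ m := by exact_mod_cast hi.2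
  linarith

end Trajectory

theorem measure_inter_preimage_eq_sum {Ω β : Type*} [MeasurableSpace Ω] [MeasurableSpace β]
    [MeasurableSingletonClass β] (μ : Measure Ω) {f : Ω → β} (hf : Measurable f)
    (B : Set Ω) (H : Finset β) :
    μ (f ⁻¹' H ∩ B) = ∑ h ∈ H, μ (f ⁻¹' {h} ∩ B) := by
  rw [← Measure.restrict_apply (hf H.measurableSet), ← sum_measure_preimage_singleton H
    fun h _ => hf (measurableSet_singleton h)]
  exact Finset.sum_congr rfl fun h _ => Measure.restrict_apply (hf (measurableSet_singleton h))

section MarkovChain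

variable {S : Type*} [Fintype S] [DecidableEq S] [MeasurableSpace S] [MeasurableSingletonClass S]
  {Ω : Type*} [MeasurableSpace Ω] (μ : Measure Ω) (X : ℕ → Ω → S) (P : S → S → ℝ≥0∞)

def IsMarkovChain : Prop :=
  ∀ (t : ℕ) (h : Fin (t + 1) → S) (s' : S),
    μ {ω | X (t + 1) ω = s' ∧ ∀ i : Fin (t + 1), X i.val ω = h i}
      = P (h (Fin.last t)) s' * μ {ω | ∀ i : Fin (t + 1), X i.val ω = h i}

variable {μ X P}

theorem IsMarkovChain.measure_trajectory_preimage_inter_succ (hmarkov : IsMarkovChain μ X P)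
    (hX : ∀ t, Measurable (X t)) (m : ℕ) (H : Finset (Fin (m + 1) → S)) (x : S) :
    μ (trajectory X m ⁻¹' H ∩ {ω | X (m + 1) ω = x})
      = ∑ z, μ (trajectory X m ⁻¹' H ∩ {ω | X m ω = z}) * P z x := by
  have hfiber (h : Fin (m + 1) → S) :
      trajectory X m ⁻¹' {h} = {ω | ∀ i : Fin (m + 1), X i ω = h i} := by
    ext ω
    simp [trajectory, funext_iff]
  have hlast (h : Fin (m + 1) → S) (z : S) :
      μ (trajectory X m ⁻¹' {h} ∩ {ω | X m ω = z})
        = if h (Fin.last m) = z then μ (trajectory X m ⁻¹' {h}) else 0 := by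
    have hXm {ω : Ω} (hω : ω ∈ trajectory X m ⁻¹' {h}) : X m ω = h (Fin.last m) :=
      congrFun (hω : trajectory X m ω = h) (Fin.last m)
    split_ifs with hz
    · exact congrArg μ (Set.inter_eq_left.mpr fun ω hω => (hXm hω).trans hz)
    · exact measure_mono_null (fun ω hω => hz ((hXm hω.1).symm.trans hω.2)) measure_empty
  simp only [measure_inter_preimage_eq_sum μ (measurable_trajectory X hX m), Finset.sum_mul,
    hlast, ite_mul, zero_mul]
  rw [Finset.sum_comm]
  refine Finset.sum_congr rfl fun h _ => ?_
  rw [Finset.sum_ite_eq, if_pos (Finset.mem_univ _), mul_comm, hfiber, ← hmarkov]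
  exact congrArg μ (Set.ext fun ω => and_comm)

theorem IsMarkovChain.measure_avoidEvent_add (hmarkov : IsMarkovChain μ X P)
    (hX : ∀ t, Measurable (X t)) (s : S) (n m : ℕ) :
    μ (avoidEvent X s (m + n))
      = ∑ x, μ (avoidEvent X s m ∩ {ω | X m ω = x}) * avoidProb P s n x := by
  induction n generalizing m with
  | zero =>
    have := measure_inter_preimage_eq_sum μ (hX m) (avoidEvent X s m) Finset.univ
    simp only [Finset.coe_univ, Set.preimage_univ, Set.univ_inter] at this
    simp only [add_zero, this, avoidProb, mul_one, Set.inter_comm]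
    rfl
  | succ n ih =>
    calc μ (avoidEvent X s (m + (n + 1)))
        = ∑ x, μ (avoidEvent X s (m + 1) ∩ {ω | X (m + 1) ω = x}) * avoidProb P s n x := by
          rw [← ih (m + 1), add_right_comm, add_assoc]
      _ = ∑ x ∈ Finset.univ.erase s,
            μ (avoidEvent X s (m + 1) ∩ {ω | X (m + 1) ω = x}) * avoidProb P s n x :=
          (Finset.sum_erase _ (by rw [avoidEvent_succ_inter_self, measure_empty, zero_mul])).symm
      _ = ∑ x ∈ Finset.univ.erase s, ∑ z,
            μ (avoidEvent X s m ∩ {ω | X m ω = z}) * P z x * avoidProb P s n x := by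
          refine Finset.sum_congr rfl fun x hx => ?_
          rw [avoidEvent_succ_inter_of_ne X s (Finset.ne_of_mem_erase hx), avoidEvent_eq_preimage,
            hmarkov.measure_trajectory_preimage_inter_succ hX, ← avoidEvent_eq_preimage,
            Finset.sum_mul]
      _ = ∑ z, μ (avoidEvent X s m ∩ {ω | X m ω = z}) * avoidProb P s (n + 1) z := by
          rw [Finset.sum_comm]
          simp only [avoidProb, Finset.mul_sum, mul_assoc]

theorem IsMarkovChain.measure_avoidEvent_le [IsProbabilityMeasure μ]
    (hmarkov : IsMarkovChain μ X P) (hX : ∀ t, Measurable (X t)) (s : S) (n : ℕ) {c : ℝ≥0∞}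
    (hc : ∀ x, avoidProb P s n x ≤ c) :
    μ (avoidEvent X s n) ≤ c := by
  have hinit : avoidEvent X s 0 = Set.univ := by simp [avoidEvent]
  have hsum : ∑ x, μ {ω | X 0 ω = x} = 1 :=
    (sum_measure_preimage_singleton Finset.univ fun x _ =>
      hX 0 (measurableSet_singleton x)).trans (by simp)
  calc μ (avoidEvent X s n)
      = ∑ x, μ {ω | X 0 ω = x} * avoidProb P s n x := by
        simpa [hinit] using hmarkov.measure_avoidEvent_add hX s n 0
    _ ≤ ∑ x, μ {ω | X 0 ω = x} * c := Finset.sum_le_sum fun x _ => mul_le_mul_right (hc x) _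
    _ = c := by rw [← Finset.sum_mul, hsum, one_mul]

end MarkovChain

/-- exponential concentration of first return times:
`P[H_s^+ ≥ t] ≤ e · e^{-t/(e·τ_s)}` for any `t > 0`, for any initial distribution. -/
theorem stmt4 {S : Type*} [Fintype S] [DecidableEq S] [MeasurableSpace S]
    [MeasurableSingletonClass S]
    {Ω : Type*} [MeasurableSpace Ω] (μ : Measure Ω) [IsProbabilityMeasure μ]
    (X : ℕ → Ω → S) (hX : ∀ t, Measurable (X t))
    (P : S → S → ℝ≥0∞) (hrow : ∀ x, ∑ y, P x y = 1)
    (hmarkov : ∀ (t : ℕ) (h : Fin (t + 1) → S) (s' : S),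
      μ {ω | X (t + 1) ω = s' ∧ ∀ i : Fin (t + 1), X i.val ω = h i}
        = P (h (Fin.last t)) s' * μ {ω | ∀ i : Fin (t + 1), X i.val ω = h i})
    (s : S) (hτ : maxHit P s ≠ ⊤) (t : ℝ) (ht : 0 < t) :
    μ {ω | ENNReal.ofReal t ≤ (retTime X s ω : ℝ≥0∞)}
      ≤ ENNReal.ofReal
          (Real.exp 1 * Real.exp (-(t / (Real.exp 1 * (maxHit P s).toReal)))) := by
  obtain ⟨m, hm⟩ := Nat.exists_eq_add_one.mpr (Nat.ceil_pos.mpr ht)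
  have hceil : (⌈t⌉₊ : ℝ) = m + 1 := by exact_mod_cast hm
  have hmt : (m : ℝ) < t := by linarith [Nat.ceil_lt_add_one ht.le]
  have htm : t ≤ m + 1 := hceil ▸ Nat.le_ceil t
  calc μ {ω | ENNReal.ofReal t ≤ (retTime X s ω : ℝ≥0∞)}
      ≤ μ (avoidEvent X s m) := measure_mono (setOf_le_retTime_subset_avoidEvent X s hmt)
    _ ≤ ENNReal.ofReal (min 1 (Real.exp (1 - m / (maxHit P s).toReal))) :=
        IsMarkovChain.measure_avoidEvent_le hmarkov hX s m (avoidProb_le_ofReal P s hrow hτ m)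
    _ ≤ _ := ENNReal.ofReal_le_ofReal (min_one_exp_one_sub_div_le (one_le_toReal_maxHit P s hτ) htm)
end
end

section
/- Determinant formula for the stationary reward: Let P be an S × S row-stochastic matrix whose eigenvalue 1 has algebraic multiplicity one, let σ be its unique stationary distribution (the row vector with σP = σ and entries summing to 1), and let r ∈ ℝ^S be a column vector. Let A_r denote the S × S matrix whose j-th column for j ≤ S − 1 equals the j-th column of P − I and whose last column equals r, and let A_1 be the same matrix with last column the all-ones vector. Then det(A_1) ≠ 0 and σ·r = det(A_r) / det(A_1). -/
/-!
Since `1` is a simple eigenvalue of `P`, the right kernel of `P - I` is spanned by the all-ones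
vector `𝟙` and the left kernel by `σ`. Expanding `det A_c` along its last column gives
`det A_c = a ⬝ c` with `a` the last row of `adj (P - I)`; as `adj (P - I) * (P - I) = 0`, `a` lies
in the left kernel, so `a = t σ` and `det A_c = t (σ ⬝ c)` for every `c`. Finally `A_𝟙` is
invertible: pairing `A_𝟙 v = 0` with `σ` kills the last coordinate of `v`, and the remaining
kernel vector of `P - I` is a multiple of `𝟙` vanishing at the last coordinate.
-/

noncomputable section

open Matrix

/-- The matrix whose first `S - 1` columns agree with those of `P - I` and whose last
column is the vector `c`. -/
def lastColReplaced {S : ℕ} (P : Matrix (Fin S) (Fin S) ℝ) (c : Fin S → ℝ) :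
    Matrix (Fin S) (Fin S) ℝ :=
  Matrix.of fun i j => if (j : ℕ) = S - 1 then c i else (P - 1) i j

namespace Matrix

variable {n K R : Type*} [Fintype n] [DecidableEq n] [Field K] [CommRing R]

theorem exists_smul_eq_of_mulVec_eq_smul_of_rootMultiplicity_eq_one {M : Matrix n n K} {μ : K}
    (hμ : M.charpoly.rootMultiplicity μ = 1) {w : n → K} (hw : w ≠ 0) (hMw : M *ᵥ w = μ • w)
    {v : n → K} (hMv : M *ᵥ v = μ • v) : ∃ c : K, v = c • w := by
  have hmem {x : n → K} (hx : M *ᵥ x = μ • x) : x ∈ Module.End.eigenspace (toLin' M) μ :=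
    Module.End.mem_eigenspace_iff.2 (by rwa [toLin'_apply])
  have hspan : (K ∙ w) = Module.End.eigenspace (toLin' M) μ := by
    refine Submodule.eq_of_le_of_finrank_le
      ((Submodule.span_singleton_le_iff_mem _ _).2 (hmem hMw)) ?_
    rw [finrank_span_singleton hw, ← hμ, ← charpoly_toLin' M]
    exact LinearMap.finrank_eigenspace_le _ _
  obtain ⟨c, hc⟩ := Submodule.mem_span_singleton.1 (hspan ▸ hmem hMv)
  exact ⟨c, hc.symm⟩

theorem exists_smul_eq_of_vecMul_eq_smul_of_rootMultiplicity_eq_one {M : Matrix n n K} {μ : K}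
    (hμ : M.charpoly.rootMultiplicity μ = 1) {w : n → K} (hw : w ≠ 0) (hwM : w ᵥ* M = μ • w)
    {v : n → K} (hvM : v ᵥ* M = μ • v) : ∃ c : K, v = c • w :=
  exists_smul_eq_of_mulVec_eq_smul_of_rootMultiplicity_eq_one (M := Mᵀ)
    (by rwa [charpoly_transpose]) hw (by rwa [mulVec_transpose]) (by rwa [mulVec_transpose])

theorem det_updateCol_eq_adjugate_dotProduct (A : Matrix n n R) (i : n) (c : n → R) :
    (A.updateCol i c).det = A.adjugate i ⬝ᵥ c := by
  rw [← cramer_apply, cramer_eq_adjugate_mulVec]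
  rfl

theorem adjugate_vecMul_eq_zero_of_det_eq_zero {A : Matrix n n R} (h : A.det = 0) (i : n) :
    A.adjugate i ᵥ* A = 0 := by
  ext j
  rw [← mul_apply_eq_vecMul, adjugate_mul, h, zero_smul]
  rfl

theorem updateCol_mulVec (A : Matrix n n R) (i : n) (c v : n → R) :
    A.updateCol i c *ᵥ v = A *ᵥ Function.update v i 0 + v i • c := by
  ext k
  simp only [mulVec, dotProduct, updateCol_apply, Function.update_apply, mul_comm, mul_ite,
    mul_zero, Finset.sum_ite, Finset.filter_eq', Finset.filter_ne', Finset.mem_univ, ↓reduceIte,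
    Finset.sum_singleton, Finset.sum_erase_eq_sub, Finset.sum_const_zero, zero_add,
    Pi.add_apply, Pi.smul_apply, smul_eq_mul]
  ring

theorem det_updateCol_ne_zero_of_ker_eq_span {B : Matrix n n K} {u σ : n → K} {i : n}
    (hker : ∀ v, B *ᵥ v = 0 → ∃ c : K, v = c • u) (hσB : σ ᵥ* B = 0) (hσu : σ ⬝ᵥ u ≠ 0)
    (hui : u i ≠ 0) : (B.updateCol i u).det ≠ 0 := by
  rw [Ne, ← exists_mulVec_eq_zero_iff]
  rintro ⟨v, hv, hBv⟩
  rw [updateCol_mulVec] at hBv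
  have hvi : v i = 0 := by
    simpa [dotProduct_add, dotProduct_mulVec, hσB, hσu] using congrArg (σ ⬝ᵥ ·) hBv
  rw [hvi, zero_smul, add_zero, Function.update_eq_self_iff.2 hvi.symm] at hBv
  obtain ⟨c, rfl⟩ := hker v hBv
  have hc : c = 0 := by simpa [hui] using hvi
  exact hv (by rw [hc, zero_smul])

theorem exists_det_updateCol_sub_one_eq_mul_dotProduct {P : Matrix n n K}
    (hP : P.charpoly.rootMultiplicity 1 = 1) {σ : n → K} (hσ : σ ≠ 0) (hσP : σ ᵥ* P = σ)
    (i : n) : ∃ t : K, ∀ c, ((P - 1).updateCol i c).det = t * (σ ⬝ᵥ c) := by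
  have hdet : (P - 1).det = 0 :=
    exists_vecMul_eq_zero_iff.1 ⟨σ, hσ, by rw [vecMul_sub, hσP, vecMul_one, sub_self]⟩
  have hadj : (P - 1).adjugate i ᵥ* P = (1 : K) • (P - 1).adjugate i := by
    simpa [vecMul_sub, sub_eq_zero] using adjugate_vecMul_eq_zero_of_det_eq_zero hdet i
  obtain ⟨t, ht⟩ := exists_smul_eq_of_vecMul_eq_smul_of_rootMultiplicity_eq_one hP hσ
    (by rw [hσP, one_smul]) hadj
  exact ⟨t, fun c => by
    rw [det_updateCol_eq_adjugate_dotProduct, ht, smul_dotProduct, smul_eq_mul]⟩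

theorem det_updateCol_sub_one_ne_zero {P : Matrix n n K}
    (hP : P.charpoly.rootMultiplicity 1 = 1) {σ u : n → K} (hσP : σ ᵥ* P = σ)
    (hPu : P *ᵥ u = u) (hσu : σ ⬝ᵥ u ≠ 0) {i : n} (hui : u i ≠ 0) :
    ((P - 1).updateCol i u).det ≠ 0 := by
  refine det_updateCol_ne_zero_of_ker_eq_span (fun v hv => ?_)
    (by rw [vecMul_sub, hσP, vecMul_one, sub_self]) hσu hui
  exact exists_smul_eq_of_mulVec_eq_smul_of_rootMultiplicity_eq_one hP
    (fun h => hui (congrFun h i)) (by rw [hPu, one_smul])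
    (by simpa [sub_mulVec, sub_eq_zero] using hv)

end Matrix

theorem stmt15_general {S : ℕ} (hS : 0 < S) (P : Matrix (Fin S) (Fin S) ℝ)
    (hrow : ∀ i, ∑ j, P i j = 1)
    (hmult : (Matrix.charpoly P).rootMultiplicity 1 = 1)
    (σ : Fin S → ℝ) (hσsum : ∑ i, σ i = 1)
    (hσP : Matrix.vecMul σ P = σ)
    (r : Fin S → ℝ) :
    (lastColReplaced P (fun _ => 1)).det ≠ 0
    ∧ σ ⬝ᵥ r = (lastColReplaced P r).det / (lastColReplaced P (fun _ => 1)).det := by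
  set l : Fin S := ⟨S - 1, by omega⟩
  have hA (c : Fin S → ℝ) : lastColReplaced P c = (P - 1).updateCol l c := by
    ext i j
    simp [lastColReplaced, updateCol_apply, l, Fin.ext_iff]
  have hP1 : P *ᵥ (fun _ => 1) = fun _ => 1 := by
    ext i
    simpa [mulVec, dotProduct] using hrow i
  have hσ1 : σ ⬝ᵥ (fun _ => 1) = 1 := by simpa [dotProduct] using hσsum
  have hσ0 : σ ≠ 0 := by rintro rfl; simp at hσ1
  obtain ⟨t, hAc⟩ := exists_det_updateCol_sub_one_eq_mul_dotProduct hmult hσ0 hσP l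
  have hA1 : ((P - 1).updateCol l fun _ => 1).det ≠ 0 :=
    det_updateCol_sub_one_ne_zero hmult hσP hP1 (by simp [hσ1]) one_ne_zero
  have ht : t ≠ 0 := by simpa [hAc, hσ1] using hA1
  simp only [hA, hAc, hσ1, mul_one]
  exact ⟨ht, by field_simp⟩

/-- determinant formula for the stationary reward: if the eigenvalue `1`
of the row-stochastic matrix `P` has algebraic multiplicity one and `σ` is its unique
stationary distribution, then `det A₁ ≠ 0` and `σ·r = det A_r / det A₁`, where `A_r`
(resp. `A₁`) is `P - I` with its last column replaced by `r` (resp. the all-ones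
vector). -/
theorem stmt15 {S : ℕ} (hS : 0 < S) (P : Matrix (Fin S) (Fin S) ℝ)
    (hnn : ∀ i j, 0 ≤ P i j) (hrow : ∀ i, ∑ j, P i j = 1)
    (hmult : (Matrix.charpoly P).rootMultiplicity 1 = 1)
    (σ : Fin S → ℝ) (hσnn : ∀ i, 0 ≤ σ i) (hσsum : ∑ i, σ i = 1)
    (hσP : Matrix.vecMul σ P = σ)
    (r : Fin S → ℝ) :
    (lastColReplaced P (fun _ => 1)).det ≠ 0
    ∧ σ ⬝ᵥ r = (lastColReplaced P r).det / (lastColReplaced P (fun _ => 1)).det :=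
  stmt15_general hS P hrow hmult σ hσsum hσP r
end
end
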